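/- arXiv:math/9804004 — 3 statements merged into one kernel-verified Lean document; each statement's English description precedes it below -/
import Mathlib

section
/- Let ℐ be a nonempty subset-closed family of admissible subsets of E_{±n} with the property that whenever I, J ∈ ℐ satisfy |I| < |J| and for all y ∈ J∖I the set {y} ∪ I is not in ℐ, then I ∪ J is inadmissible and there exists x ∉ I such that both {x} ∪ I and {−x} ∪ (I ∖ (−J)) are in ℐ. Let ℬ be the collection of maximal members of ℐ with respect to inclusion. Then (E_{±n}, ℬ) is a symplectic matroid, i.e., ℬ is a nonempty family of equinumerous admissible subsets of E_{±n} and for every admissible total ordering ≺ of E_{±n} and every weight function ω compatible with ≺, the greedy solution of ℬ is optimal. -/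
/-- The ground set `E_{±n} = {±1, ±2, …, ±n}` as a finite set of integers. -/
noncomputable def SympE (n : ℕ) : Finset ℤ := (Finset.Icc (-(n : ℤ)) (n : ℤ)).erase 0

/-- `negSet S = {-s : s ∈ S}`. -/
def negSet (S : Finset ℤ) : Finset ℤ := S.image (fun x => -x)

/-- A set `S` is admissible if `S ∩ (-S) = ∅`. -/
def IsAdmissibleSet (S : Finset ℤ) : Prop := ∀ s ∈ S, -s ∉ S

/-- An admissible permutation of `E_{±n}`: a permutation of `ℤ` mapping `E_{±n}` to
itself and commuting with negation.  It induces the admissible total ordering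
`x ≺ y ↔ w x < w y` on `E_{±n}`. -/
def IsAdmissiblePerm (n : ℕ) (w : Equiv.Perm ℤ) : Prop :=
  (∀ x ∈ SympE n, w x ∈ SympE n) ∧ ∀ x : ℤ, w (-x) = -(w x)

/-- A weight function `ω` compatible with the admissible ordering induced by `w`:
`i ≺ j` implies `ω i ≤ ω j`. -/
def IsCompatibleWeight (n : ℕ) (w : Equiv.Perm ℤ) (ω : ℤ → ℝ) : Prop :=
  ∀ i ∈ SympE n, ∀ j ∈ SympE n, w i < w j → ω i ≤ ω j

/-- The elements of `E_{±n}` listed from largest to smallest with respect to the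
admissible ordering induced by `w`. -/
noncomputable def orderList (n : ℕ) (w : Equiv.Perm ℤ) : List ℤ :=
  (((SympE n).sort (· ≤ ·)).reverse).map w.symm

/-- The greedy algorithm: processing the elements of the list in order, starting
with the current set `B`, pick up an element iff adding it keeps the current set
a subset of some member of `ℬ`.  Returns the list of picked-up elements in order. -/
def greedyAux (ℬ : Finset (Finset ℤ)) : List ℤ → Finset ℤ → List ℤ
  | [], _ => []
  | a :: l, B =>
      if ∃ B' ∈ ℬ, insert a B ⊆ B' then a :: greedyAux ℬ l (insert a B)
      else greedyAux ℬ l B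

/-- The list of elements picked up by the greedy algorithm on `ℬ`, in decreasing
order with respect to the admissible ordering induced by `w`. -/
noncomputable def greedyPicks (n : ℕ) (ℬ : Finset (Finset ℤ)) (w : Equiv.Perm ℤ) : List ℤ :=
  greedyAux ℬ (orderList n w) ∅

/-- The greedy solution of `ℬ` with respect to the admissible ordering induced
by `w`. -/
noncomputable def greedySol (n : ℕ) (ℬ : Finset (Finset ℤ)) (w : Equiv.Perm ℤ) : Finset ℤ :=
  (greedyPicks n ℬ w).toFinset

/-- `(E_{±n}, ℬ)` is a symplectic matroid: `ℬ` is a nonempty family of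
equinumerous admissible subsets of `E_{±n}` such that for every admissible
ordering and every compatible weight function the greedy solution is optimal. -/
def IsSymplecticMatroid (n : ℕ) (ℬ : Finset (Finset ℤ)) : Prop :=
  ℬ.Nonempty ∧
  (∀ B ∈ ℬ, B ⊆ SympE n ∧ IsAdmissibleSet B) ∧
  (∀ B ∈ ℬ, ∀ B' ∈ ℬ, B.card = B'.card) ∧
  (∀ w : Equiv.Perm ℤ, IsAdmissiblePerm n w →
    ∀ ω : ℤ → ℝ, IsCompatibleWeight n w ω →
      ∀ B' ∈ ℬ, ∑ b ∈ B', ω b ≤ ∑ b ∈ greedySol n ℬ w, ω b)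

/-- The family of independent sets of `(E_{±n}, ℬ)`:
all subsets of `E_{±n}` contained in some member of `ℬ`. -/
noncomputable def indepSets (n : ℕ) (ℬ : Finset (Finset ℤ)) : Finset (Finset ℤ) :=
  (SympE n).powerset.filter (fun I => ∃ B ∈ ℬ, I ⊆ B)

/-- The collection of maximal (with respect to inclusion) members of `ℐ`. -/
def maximalMembers (ℐ : Finset (Finset ℤ)) : Finset (Finset ℤ) :=
  ℐ.filter (fun B => ∀ I ∈ ℐ, B ⊆ I → I = B)

/-- The independent-set exchange property for symplectic matroids. -/
def ExchangeProp (ℐ : Finset (Finset ℤ)) : Prop :=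
  ∀ I ∈ ℐ, ∀ J ∈ ℐ, I.card < J.card →
    (∀ y ∈ J \ I, insert y I ∉ ℐ) →
      ¬ IsAdmissibleSet (I ∪ J) ∧
        ∃ x, x ∉ I ∧ insert x I ∈ ℐ ∧ insert (-x) (I \ negSet J) ∈ ℐ

/-!
The greedy solution `G` lies in `ℐ`, and every element `y` it rejects is blocked by earlier picks:
some `C ⊆ G` of elements preceding `y` has `insert y C ∉ ℐ`. Hence for every threshold `c`, no
member `J` of `ℐ` lying above `c` is larger than the part `P` of `G` above `c`. Otherwise the
exchange property gives `x ∉ P` with `insert x P` and `insert (-x) (P \ -J)` in `ℐ`. Blocking puts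
`x` below `c`, and an inadmissible pair `u ∈ P`, `-u ∈ J` forces `c ≤ 0`, so `-x` lies above `c`.
Then `-x ∉ G` (it would sit in `P` next to `x`), yet its blocking set lies inside `P \ -J`.
Since all bases are equinumerous, this domination of counts above every threshold gives
optimality by comparing the two sets from the top down.
-/

open Finset

theorem neg_mem_sympE {n : ℕ} {x : ℤ} (hx : x ∈ SympE n) : -x ∈ SympE n := by
  simp only [SympE, mem_erase, mem_Icc] at *
  omega

theorem IsAdmissibleSet.exists_neg_mem_of_union {S T : Finset ℤ} (hS : IsAdmissibleSet S)
    (hT : IsAdmissibleSet T) (h : ¬IsAdmissibleSet (S ∪ T)) : ∃ u ∈ S, -u ∈ T := by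
  simp only [IsAdmissibleSet, mem_union, not_forall, not_not] at h
  obtain ⟨z, hz | hz, hnz | hnz⟩ := h
  · exact absurd hnz (hS z hz)
  · exact ⟨z, hz, hnz⟩
  · exact ⟨-z, hnz, by rwa [neg_neg]⟩
  · exact absurd hnz (hT z hz)

theorem sum_le_sum_of_card_filter_le {α β : Type*} [LinearOrder α] [AddCommMonoid β]
    [PartialOrder β] [IsOrderedAddMonoid β] {f : α → β} {A B : Finset α} (hcard : #A = #B)
    (hdom : ∀ c, #{a ∈ A | c ≤ a} ≤ #{b ∈ B | c ≤ b}) (hf : MonotoneOn f ↑(A ∪ B)) :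
    ∑ a ∈ A, f a ≤ ∑ b ∈ B, f b := by
  induction hA : #A generalizing A B with
  | zero =>
    rw [card_eq_zero.1 hA, card_eq_zero.1 (hcard.symm.trans hA)]
  | succ k ih =>
    have hAne : A.Nonempty := card_pos.1 (by omega)
    have hBne : B.Nonempty := card_pos.1 (by omega)
    set a := A.max' hAne
    set b := B.max' hBne
    have ha : a ∈ A := A.max'_mem hAne
    have hb : b ∈ B := B.max'_mem hBne
    have hab : a ≤ b := by
      obtain ⟨β, hβ⟩ : {x ∈ B | a ≤ x}.Nonempty :=
        card_pos.1 ((card_pos.2 ⟨a, mem_filter.2 ⟨ha, le_rfl⟩⟩).trans_le (hdom a))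
      exact (mem_filter.1 hβ).2.trans (B.le_max' β (mem_filter.1 hβ).1)
    have hdom' (c : α) : #{x ∈ A.erase a | c ≤ x} ≤ #{x ∈ B.erase b | c ≤ x} := by
      rw [filter_erase, filter_erase]
      by_cases hc : c ≤ a
      · rw [card_erase_of_mem (mem_filter.2 ⟨ha, hc⟩),
          card_erase_of_mem (mem_filter.2 ⟨hb, hc.trans hab⟩)]
        exact Nat.sub_le_sub_right (hdom c) 1
      · rw [filter_false_of_mem fun x hx hcx => hc (hcx.trans (A.le_max' x hx))]
        simp
    have hsub : A.erase a ∪ B.erase b ⊆ A ∪ B :=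
      union_subset_union (erase_subset _ _) (erase_subset _ _)
    have hrest := ih (by rw [card_erase_of_mem ha, card_erase_of_mem hb, hcard])
      hdom' (hf.mono (by exact_mod_cast hsub))
      (by rw [card_erase_of_mem ha, hA]; rfl)
    calc ∑ x ∈ A, f x = f a + ∑ x ∈ A.erase a, f x := (add_sum_erase A f ha).symm
      _ ≤ f b + ∑ x ∈ B.erase b, f x :=
        add_le_add (hf (mem_coe.2 (mem_union_left _ ha)) (mem_coe.2 (mem_union_right _ hb)) hab)
          hrest
      _ = ∑ x ∈ B, f x := add_sum_erase B f hb

theorem sum_le_sum_of_isCompatibleWeight {n : ℕ} {w : Equiv.Perm ℤ} {ω : ℤ → ℝ}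
    (hω : IsCompatibleWeight n w ω) {A B : Finset ℤ} (hA : A ⊆ SympE n) (hB : B ⊆ SympE n)
    (hcard : #A = #B) (hdom : ∀ c, #{a ∈ A | c ≤ w a} ≤ #{b ∈ B | c ≤ w b}) :
    ∑ a ∈ A, ω a ≤ ∑ b ∈ B, ω b := by
  have hmono : MonotoneOn (ω ∘ w.symm) ↑(A.map w.toEmbedding ∪ B.map w.toEmbedding) := by
    have hE : ∀ t ∈ A.map w.toEmbedding ∪ B.map w.toEmbedding, w.symm t ∈ SympE n := by
      simp only [mem_union, mem_map_equiv]
      rintro t (ht | ht)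
      exacts [hA ht, hB ht]
    intro i hi j hj hij
    rcases hij.eq_or_lt with rfl | hij
    · rfl
    · exact hω _ (hE i hi) _ (hE j hj) (by simpa using hij)
  simpa [sum_map, filter_map] using
    sum_le_sum_of_card_filter_le (A := A.map w.toEmbedding) (B := B.map w.toEmbedding)
      (by simpa using hcard) (fun c => by simpa [filter_map] using hdom c) hmono

section Greedy

variable (ℬ : Finset (Finset ℤ))

theorem greedyAux_subset_of_subset (l : List ℤ) {B : Finset ℤ} (hB : ∃ D ∈ ℬ, B ⊆ D) :
    ∃ D ∈ ℬ, B ∪ (greedyAux ℬ l B).toFinset ⊆ D := by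
  induction l generalizing B with
  | nil => simpa [greedyAux] using hB
  | cons a l ih =>
    rw [greedyAux]
    split_ifs with ha
    · rw [List.toFinset_cons, union_insert, ← insert_union]
      exact ih ha
    · exact ih hB

theorem greedyAux_exists_blocking {r : ℤ → ℤ → Prop} {l : List ℤ} (hl : l.Pairwise r)
    {B : Finset ℤ} {y : ℤ} (hy : y ∈ l) (hyB : y ∉ (greedyAux ℬ l B).toFinset) :
    ∃ C ⊆ B ∪ (greedyAux ℬ l B).toFinset, (∀ c ∈ C, c ∈ B ∨ r c y) ∧
      ¬∃ D ∈ ℬ, insert y C ⊆ D := by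
  induction l generalizing B with
  | nil => simp at hy
  | cons a l ih =>
    rw [greedyAux] at hyB ⊢
    split_ifs at hyB ⊢ with ha
    · rw [List.toFinset_cons, mem_insert, not_or] at hyB
      have hyl : y ∈ l := (List.mem_cons.1 hy).resolve_left hyB.1
      obtain ⟨C, hCsub, hCpre, hCblock⟩ := ih hl.of_cons hyl hyB.2
      refine ⟨C, ?_, fun c hc => ?_, hCblock⟩
      · rwa [List.toFinset_cons, union_insert, ← insert_union]
      · rcases hCpre c hc with hcB | hcy
        · rcases mem_insert.1 hcB with rfl | hcB
          · exact Or.inr (List.rel_of_pairwise_cons hl hyl)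
          · exact Or.inl hcB
        · exact Or.inr hcy
    · rcases List.mem_cons.1 hy with rfl | hyl
      · exact ⟨B, subset_union_left, fun c hc => Or.inl hc, ha⟩
      · exact ih hl.of_cons hyl hyB

variable {ℬ} {n : ℕ} {w : Equiv.Perm ℤ}

theorem greedySol_subset (hℬ : ℬ.Nonempty) : ∃ D ∈ ℬ, greedySol n ℬ w ⊆ D := by
  obtain ⟨B₀, hB₀⟩ := hℬ
  simpa [greedySol, greedyPicks] using
    greedyAux_subset_of_subset ℬ (orderList n w) ⟨B₀, hB₀, empty_subset _⟩

theorem mem_orderList (hw : IsAdmissiblePerm n w) {y : ℤ} (hy : y ∈ SympE n) :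
    y ∈ orderList n w := by
  simp only [orderList, List.mem_map, List.mem_reverse, mem_sort]
  exact ⟨w y, hw.1 y hy, w.symm_apply_apply y⟩

theorem orderList_pairwise (n : ℕ) (w : Equiv.Perm ℤ) :
    (orderList n w).Pairwise fun p q => w q < w p := by
  rw [orderList, List.pairwise_map, List.pairwise_reverse]
  simpa using ((SympE n).sortedLT_sort).pairwise

theorem exists_blocking_of_notMem_greedySol (hw : IsAdmissiblePerm n w) {y : ℤ}
    (hy : y ∈ SympE n) (hyG : y ∉ greedySol n ℬ w) :
    ∃ C ⊆ greedySol n ℬ w, (∀ c ∈ C, w y < w c) ∧ ¬∃ D ∈ ℬ, insert y C ⊆ D := by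
  obtain ⟨C, hCsub, hCpre, hCblock⟩ :=
    greedyAux_exists_blocking ℬ (orderList_pairwise n w) (mem_orderList hw hy) hyG
  rw [empty_union] at hCsub
  exact ⟨C, hCsub, fun c hc => (hCpre c hc).resolve_left (notMem_empty c), hCblock⟩

end Greedy

section Exchange

variable {n : ℕ} {ℐ : Finset (Finset ℤ)}

theorem mem_maximalMembers_iff {B : Finset ℤ} :
    B ∈ maximalMembers ℐ ↔ Maximal (· ∈ ℐ) B := by
  simp only [maximalMembers, mem_filter, Maximal]
  exact and_congr_right fun _ =>
    forall₂_congr fun I _ => imp_congr_right fun hBI => ⟨fun h => h.le, fun h => h.antisymm hBI⟩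

theorem mem_iff_exists_maximalMembers (hclosed : ∀ I ∈ ℐ, ∀ I' ⊆ I, I' ∈ ℐ) {S : Finset ℤ} :
    S ∈ ℐ ↔ ∃ B ∈ maximalMembers ℐ, S ⊆ B := by
  refine ⟨fun hS => ?_, fun ⟨B, hB, hSB⟩ => hclosed B (mem_filter.1 hB).1 S hSB⟩
  obtain ⟨B, hSB, hB⟩ := ℐ.exists_le_maximal hS
  exact ⟨B, mem_maximalMembers_iff.2 hB, hSB⟩

theorem Maximal.insert_notMem {B : Finset ℤ} (hB : Maximal (· ∈ ℐ) B) {x : ℤ} (hx : x ∉ B) :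
    insert x B ∉ ℐ := fun h =>
  hx (hB.eq_of_ge h (subset_insert x B) ▸ mem_insert_self x B)

theorem card_le_of_maximal (hex : ExchangeProp ℐ) {B J : Finset ℤ} (hB : Maximal (· ∈ ℐ) B)
    (hJ : J ∈ ℐ) : #J ≤ #B := by
  by_contra! hlt
  obtain ⟨-, x, hxB, hx, -⟩ :=
    hex B hB.prop J hJ hlt fun y hy => hB.insert_notMem (mem_sdiff.1 hy).2
  exact hB.insert_notMem hxB hx

def IsGreedyClosed (n : ℕ) (ℐ : Finset (Finset ℤ)) (w : Equiv.Perm ℤ) (G : Finset ℤ) : Prop :=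
  ∀ y ∈ SympE n, y ∉ G → ∃ C ⊆ G, (∀ c ∈ C, w y < w c) ∧ insert y C ∉ ℐ

variable {w : Equiv.Perm ℤ} {G : Finset ℤ}

theorem isGreedyClosed_greedySol (hclosed : ∀ I ∈ ℐ, ∀ I' ⊆ I, I' ∈ ℐ)
    (hw : IsAdmissiblePerm n w) : IsGreedyClosed n ℐ w (greedySol n (maximalMembers ℐ) w) := by
  intro y hy hyG
  obtain ⟨C, hCG, hCpre, hCblock⟩ := exists_blocking_of_notMem_greedySol hw hy hyG
  exact ⟨C, hCG, hCpre, fun h => hCblock ((mem_iff_exists_maximalMembers hclosed).1 h)⟩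

theorem IsGreedyClosed.maximal (hclosed : ∀ I ∈ ℐ, ∀ I' ⊆ I, I' ∈ ℐ)
    (hadm : ∀ I ∈ ℐ, I ⊆ SympE n ∧ IsAdmissibleSet I) (hGI : G ∈ ℐ)
    (hG : IsGreedyClosed n ℐ w G) : Maximal (· ∈ ℐ) G := by
  refine ⟨hGI, fun I hI hGI' y hyI => ?_⟩
  by_contra hyG
  obtain ⟨C, hCG, -, hCblock⟩ := hG y ((hadm I hI).1 hyI) hyG
  exact hCblock (hclosed I hI _ (insert_subset hyI (hCG.trans hGI')))

theorem IsGreedyClosed.mem_of_insert_filter_mem (hclosed : ∀ I ∈ ℐ, ∀ I' ⊆ I, I' ∈ ℐ)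
    (hG : IsGreedyClosed n ℐ w G) {c y : ℤ} (hy : y ∈ SympE n) (hcy : c ≤ w y)
    (hins : insert y {g ∈ G | c ≤ w g} ∈ ℐ) :
    y ∈ G := by
  by_contra hyG
  obtain ⟨C, hCG, hCpre, hCblock⟩ := hG y hy hyG
  have hCP : C ⊆ {g ∈ G | c ≤ w g} := fun t ht =>
    mem_filter.2 ⟨hCG ht, hcy.trans (hCpre t ht).le⟩
  exact hCblock (hclosed _ hins _ (insert_subset_insert y hCP))

theorem IsGreedyClosed.card_le_card_filter (hclosed : ∀ I ∈ ℐ, ∀ I' ⊆ I, I' ∈ ℐ)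
    (hadm : ∀ I ∈ ℐ, I ⊆ SympE n ∧ IsAdmissibleSet I) (hex : ExchangeProp ℐ)
    (hw : ∀ x, w (-x) = -w x) (hGI : G ∈ ℐ) (hG : IsGreedyClosed n ℐ w G) {c : ℤ}
    {J : Finset ℤ} (hJ : J ∈ ℐ) (hJc : ∀ j ∈ J, c ≤ w j) :
    #J ≤ #{g ∈ G | c ≤ w g} := by
  by_contra! hlt
  set P := {g ∈ G | c ≤ w g}
  have hPI : P ∈ ℐ := hclosed G hGI P (filter_subset _ _)
  have hstuck : ∀ y ∈ J \ P, insert y P ∉ ℐ := fun y hy hins =>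
    have hyJ := (mem_sdiff.1 hy).1
    (mem_sdiff.1 hy).2 (mem_filter.2
      ⟨hG.mem_of_insert_filter_mem hclosed ((hadm J hJ).1 hyJ) (hJc y hyJ) hins, hJc y hyJ⟩)
  obtain ⟨hPJ, x, hxP, hxI, hx'I⟩ := hex P hPI J hJ hlt hstuck
  have hx : x ∈ SympE n := (hadm _ hxI).1 (mem_insert_self x P)
  have hxc : w x < c := by
    by_contra! hcx
    exact hxP (mem_filter.2 ⟨hG.mem_of_insert_filter_mem hclosed hx hcx hxI, hcx⟩)
  obtain ⟨u, huP, huJ⟩ := (hadm P hPI).2.exists_neg_mem_of_union (hadm J hJ).2 hPJ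
  have hc : c ≤ 0 := by
    have hcu := (mem_filter.1 huP).2
    have hcu' := hJc _ huJ
    rw [hw] at hcu'
    omega
  have hnxG : -x ∉ G := fun h =>
    (hadm _ hxI).2 x (mem_insert_self x P)
      (mem_insert_of_mem (mem_filter.2 ⟨h, by rw [hw]; omega⟩))
  obtain ⟨C, hCG, hCpre, hCblock⟩ := hG (-x) (neg_mem_sympE hx) hnxG
  have hCP : C ⊆ P \ negSet J := by
    intro t ht
    have hxt := hCpre t ht
    rw [hw] at hxt
    refine mem_sdiff.2 ⟨mem_filter.2 ⟨hCG ht, by omega⟩, fun htJ => ?_⟩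
    obtain ⟨j, hj, rfl⟩ := mem_image.1 htJ
    have hcj := hJc j hj
    rw [hw] at hxt
    omega
  exact hCblock (hclosed _ hx'I _ (insert_subset_insert _ hCP))

end Exchange

theorem exchange_gives_symplectic_matroid_general (n : ℕ) (ℐ : Finset (Finset ℤ))
    (hne : ℐ.Nonempty)
    (hclosed : ∀ I ∈ ℐ, ∀ I' ⊆ I, I' ∈ ℐ)
    (hadm : ∀ I ∈ ℐ, I ⊆ SympE n ∧ IsAdmissibleSet I)
    (hex : ExchangeProp ℐ) :
    IsSymplecticMatroid n (maximalMembers ℐ) := by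
  have hmax {B : Finset ℤ} (hB : B ∈ maximalMembers ℐ) := mem_maximalMembers_iff.1 hB
  have hℬ : (maximalMembers ℐ).Nonempty := by
    obtain ⟨I, hI⟩ := hne
    obtain ⟨B, hB, -⟩ := (mem_iff_exists_maximalMembers hclosed).1 hI
    exact ⟨B, hB⟩
  have hcard : ∀ B ∈ maximalMembers ℐ, ∀ B' ∈ maximalMembers ℐ, #B = #B' := fun B hB B' hB' =>
    (card_le_of_maximal hex (hmax hB') (hmax hB).prop).antisymm
      (card_le_of_maximal hex (hmax hB) (hmax hB').prop)
  refine ⟨hℬ, fun B hB => hadm B (hmax hB).prop, hcard, fun w hw ω hω B hB => ?_⟩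
  set G := greedySol n (maximalMembers ℐ) w
  have hGI : G ∈ ℐ := (mem_iff_exists_maximalMembers hclosed).2 (greedySol_subset hℬ)
  have hG : IsGreedyClosed n ℐ w G := isGreedyClosed_greedySol hclosed hw
  refine sum_le_sum_of_isCompatibleWeight hω (hadm B (hmax hB).prop).1 (hadm G hGI).1
    (hcard B hB G (mem_maximalMembers_iff.2 (hG.maximal hclosed hadm hGI))) fun c => ?_
  exact hG.card_le_card_filter hclosed hadm hex hw.2 hGI
    (hclosed B (hmax hB).prop _ (filter_subset _ _)) fun j hj => (mem_filter.1 hj).2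

/-- **Sufficiency.** If a nonempty subset-closed family `ℐ` of admissible subsets
of `E_{±n}` satisfies the exchange property, then the collection `ℬ` of maximal
members of `ℐ` forms a symplectic matroid `(E_{±n}, ℬ)`. -/
theorem exchange_gives_symplectic_matroid (n : ℕ) (hn : 0 < n) (ℐ : Finset (Finset ℤ))
    (hne : ℐ.Nonempty)
    (hclosed : ∀ I ∈ ℐ, ∀ I' ⊆ I, I' ∈ ℐ)
    (hadm : ∀ I ∈ ℐ, I ⊆ SympE n ∧ IsAdmissibleSet I)
    (hex : ExchangeProp ℐ) :
    IsSymplecticMatroid n (maximalMembers ℐ) :=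
  exchange_gives_symplectic_matroid_general n ℐ hne hclosed hadm hex
end

section
/- Let ℐ be the family of independent sets of a symplectic matroid (E_{±n}, ℬ), and let I and J be members of ℐ such that |I| < |J| and such that for all y ∈ J∖I the set {y} ∪ I is not in ℐ. Then I ∪ J is inadmissible and there exists x ∉ I such that both {x} ∪ I and {−x} ∪ (I ∖ (−J)) are in ℐ. -/
/-!
Both conclusions come from running the greedy algorithm along a suitable admissible ordering
and testing optimality against the weight that is `1` on an initial segment `P` of the
ordering and `0` after it: then no basis meets `P` in more elements than the greedy solution.

If `I ∪ J` were admissible, list `I`, then `J \ I`, then the remaining pairs: the greedy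
algorithm picks `I` and, by hypothesis, nothing of `J \ I`, while the basis containing `J` meets
this segment in at least `|J| > |I|` elements.

For the exchange, let `E` be the set of `x ∉ I` with `{x} ∪ I` independent and suppose no
`x ∈ E` has `{-x} ∪ (I \ -J)` independent. Order `I \ -J`, then `-E`, then `I ∩ -J`, then
the remaining pairs, so that the last elements of the ordering are `E ∪ -(I \ -J)`. Up to that
point the greedy algorithm picks exactly `I`, whereas `J` avoids `E ∪ -(I \ -J)`; this again
contradicts `|I| < |J|`.
-/

section Basic

variable {n : ℕ}

lemma mem_SympE {x : ℤ} : x ∈ SympE n ↔ x ≠ 0 ∧ -(n : ℤ) ≤ x ∧ x ≤ n := by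
  simp [SympE]

lemma neg_mem_SympE {x : ℤ} (h : x ∈ SympE n) : -x ∈ SympE n := by
  rw [mem_SympE] at h ⊢
  omega

lemma mem_negSet {S : Finset ℤ} {x : ℤ} : x ∈ negSet S ↔ -x ∈ S := by
  simp [negSet, neg_eq_iff_eq_neg]

lemma mem_reverse_map_neg {l : List ℤ} {x : ℤ} : x ∈ (l.map (fun y => -y)).reverse ↔ -x ∈ l := by
  simp [neg_eq_iff_eq_neg]

variable {ℬ : Finset (Finset ℤ)}

lemma mem_indepSets_iff (hB : IsSymplecticMatroid n ℬ) {I : Finset ℤ} :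
    I ∈ indepSets n ℬ ↔ ∃ B ∈ ℬ, I ⊆ B := by
  simp only [indepSets, Finset.mem_filter, Finset.mem_powerset, and_iff_right_iff_imp]
  rintro ⟨B, hB', hIB⟩
  exact hIB.trans (hB.2.1 B hB').1

lemma mem_SympE_of_mem_indepSets {I : Finset ℤ} (hI : I ∈ indepSets n ℬ) {x : ℤ} (hx : x ∈ I) :
    x ∈ SympE n :=
  Finset.mem_powerset.1 (Finset.mem_filter.1 hI).1 hx

lemma mem_indepSets_of_subset {I I' : Finset ℤ} (hI : I ∈ indepSets n ℬ) (h : I' ⊆ I) :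
    I' ∈ indepSets n ℬ := by
  simp only [indepSets, Finset.mem_filter, Finset.mem_powerset] at hI ⊢
  exact ⟨h.trans hI.1, hI.2.imp fun B hB => ⟨hB.1, h.trans hB.2⟩⟩

lemma IsSymplecticMatroid.isAdmissibleSet_of_mem_indepSets (hB : IsSymplecticMatroid n ℬ)
    {I : Finset ℤ} (hI : I ∈ indepSets n ℬ) : IsAdmissibleSet I := by
  obtain ⟨B, hB', hIB⟩ := (mem_indepSets_iff hB).1 hI
  exact fun s hs hns => (hB.2.1 B hB').2 s (hIB hs) (hIB hns)

end Basic

section Greedy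

variable (ℬ : Finset (Finset ℤ))

lemma mem_of_mem_greedyAux {l : List ℤ} {B : Finset ℤ} {a : ℤ} (h : a ∈ greedyAux ℬ l B) :
    a ∈ l := by
  induction l generalizing B with
  | nil => simp [greedyAux] at h
  | cons b l ih =>
    rw [greedyAux] at h
    split at h
    · rcases List.mem_cons.1 h with rfl | h
      · exact List.mem_cons_self
      · exact List.mem_cons_of_mem _ (ih h)
    · exact List.mem_cons_of_mem _ (ih h)

lemma greedyAux_append (l₁ l₂ : List ℤ) (B : Finset ℤ) :
    greedyAux ℬ (l₁ ++ l₂) B =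
      greedyAux ℬ l₁ B ++ greedyAux ℬ l₂ (B ∪ (greedyAux ℬ l₁ B).toFinset) := by
  induction l₁ generalizing B with
  | nil => simp [greedyAux]
  | cons a l ih =>
    rw [List.cons_append, greedyAux, greedyAux]
    split
    · rw [ih, List.cons_append, List.toFinset_cons, Finset.union_insert, Finset.insert_union]
    · rw [ih]

lemma greedyAux_eq_self {l : List ℤ} {B : Finset ℤ} (h : ∃ B' ∈ ℬ, B ∪ l.toFinset ⊆ B') :
    greedyAux ℬ l B = l := by
  induction l generalizing B with
  | nil => rfl
  | cons a l ih =>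
    have hset : insert a B ∪ l.toFinset = B ∪ (a :: l).toFinset := by
      rw [List.toFinset_cons, Finset.union_insert, Finset.insert_union]
    obtain ⟨B', hB', hsub⟩ := h
    rw [← hset] at hsub
    rw [greedyAux, if_pos ⟨B', hB', Finset.subset_union_left.trans hsub⟩, ih ⟨B', hB', hsub⟩]

lemma greedyAux_eq_nil {l : List ℤ} {B : Finset ℤ} (h : ∀ a ∈ l, ¬ ∃ B' ∈ ℬ, insert a B ⊆ B') :
    greedyAux ℬ l B = [] := by
  induction l with
  | nil => rfl
  | cons a l ih =>
    rw [greedyAux, if_neg (h a List.mem_cons_self)]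
    exact ih fun b hb => h b (List.mem_cons_of_mem _ hb)

end Greedy

section OrderList

lemma reverse_map_range {α : Type*} (n : ℕ) (f : ℕ → α) :
    ((List.range n).map f).reverse = (List.range n).map (fun i => f (n - 1 - i)) := by
  apply List.ext_getElem
  · simp
  · intro i h1 h2
    simp only [List.getElem_reverse, List.getElem_map, List.getElem_range, List.length_map,
      List.length_range]

lemma sort_SympE (n : ℕ) :
    (SympE n).sort (· ≤ ·) =
      (List.range n).map (fun i : ℕ => (i : ℤ) - n) ++
        (List.range n).map (fun i : ℕ => (i : ℤ) + 1) := by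
  set l := (List.range n).map (fun i : ℕ => (i : ℤ) - n) ++
    (List.range n).map (fun i : ℕ => (i : ℤ) + 1)
  have hsorted : l.Pairwise (· < ·) := by
    refine List.pairwise_append.2 ⟨?_, ?_, ?_⟩
    · exact List.Pairwise.map _ (fun a b (h : a < b) => by omega) List.pairwise_lt_range
    · exact List.Pairwise.map _ (fun a b (h : a < b) => by omega) List.pairwise_lt_range
    · simp only [List.mem_map, List.mem_range]
      rintro _ ⟨i, hi, rfl⟩ _ ⟨j, hj, rfl⟩
      omega
  have hmem : ∀ x, x ∈ (SympE n).sort (· ≤ ·) ↔ x ∈ l := by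
    intro x
    simp only [Finset.mem_sort, mem_SympE, l, List.mem_append, List.mem_map, List.mem_range]
    constructor
    · rintro ⟨h0, h1, h2⟩
      rcases lt_or_gt_of_ne h0 with h | h
      · exact Or.inl ⟨(x + n).toNat, by omega, by omega⟩
      · exact Or.inr ⟨(x - 1).toNat, by omega, by omega⟩
    · rintro (⟨i, hi, rfl⟩ | ⟨i, hi, rfl⟩) <;> omega
  exact List.SortedLT.eq_of_mem_iff (Finset.sortedLT_sort _) hsorted.sortedLT hmem

variable (n : ℕ) (w : Equiv.Perm ℤ)

lemma pairwise_orderList : (orderList n w).Pairwise (fun a b => w b < w a) := by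
  rw [orderList, List.pairwise_map, List.pairwise_reverse]
  simpa using (Finset.sortedLT_sort (SympE n)).pairwise

lemma nodup_orderList : (orderList n w).Nodup :=
  (List.nodup_reverse.2 (Finset.sort_nodup _ _)).map w.symm.injective

variable {n w}

lemma mem_orderList_s2 {x : ℤ} : x ∈ orderList n w ↔ w x ∈ SympE n := by
  simp only [orderList, List.mem_map, List.mem_reverse, Finset.mem_sort, Equiv.symm_apply_eq,
    exists_eq_right]

end OrderList

/-- The top half of an admissible ordering of `E_{±n}`, listed from the top. -/
structure IsTransversal (n : ℕ) (L : List ℤ) : Prop where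
  subset : ∀ x ∈ L, x ∈ SympE n
  nodup : L.Nodup
  neg_notMem : ∀ x ∈ L, -x ∉ L
  mem_or_neg_mem : ∀ x ∈ SympE n, x ∈ L ∨ -x ∈ L

def transversalFun (n : ℕ) (L : List ℤ) (x : ℤ) : ℤ :=
  if x ∈ L then (n : ℤ) - L.idxOf x
  else if -x ∈ L then (L.idxOf (-x) : ℤ) - n
  else x

def transversalInv (n : ℕ) (L : List ℤ) (j : ℤ) : ℤ :=
  if 0 < j ∧ j ≤ n then L.getD (n - j.toNat) 0
  else if -(n : ℤ) ≤ j ∧ j < 0 then -L.getD (n - (-j).toNat) 0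
  else j

namespace IsTransversal

variable {n : ℕ} {L : List ℤ} (hL : IsTransversal n L)
include hL

lemma length_eq : L.length = n := by
  have hinj : Set.InjOn Int.natAbs L.toFinset := by
    intro a ha b hb hab
    rcases Int.natAbs_eq_natAbs_iff.1 hab with h | h
    · exact h
    · exact (hL.neg_notMem b (List.mem_toFinset.1 hb) (h ▸ List.mem_toFinset.1 ha)).elim
  have himage : L.toFinset.image Int.natAbs = Finset.Icc 1 n := by
    ext k
    simp only [Finset.mem_image, List.mem_toFinset, Finset.mem_Icc]
    constructor
    · rintro ⟨a, ha, rfl⟩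
      have := mem_SympE.1 (hL.subset a ha)
      omega
    · intro hk
      rcases hL.mem_or_neg_mem k (mem_SympE.2 (by omega)) with h | h
      · exact ⟨k, h, rfl⟩
      · exact ⟨-k, h, by simp⟩
  rw [← List.toFinset_card_of_nodup hL.nodup, ← Finset.card_image_of_injOn hinj, himage,
    Nat.card_Icc, Nat.add_sub_cancel]

lemma idxOf_lt {x : ℤ} (hx : x ∈ L) : L.idxOf x < n :=
  hL.length_eq ▸ List.idxOf_lt_length_iff.2 hx

lemma leftInverse : Function.LeftInverse (transversalInv n L) (transversalFun n L) := by
  intro x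
  have hlen := hL.length_eq
  by_cases hx : x ∈ L
  · have hi := hL.idxOf_lt hx
    rw [transversalFun, if_pos hx, transversalInv, if_pos (by omega),
      show n - ((n : ℤ) - L.idxOf x).toNat = L.idxOf x by omega,
      List.getD_eq_getElem _ _ (by omega), List.getElem_idxOf]
  · by_cases hnx : -x ∈ L
    · have hi := hL.idxOf_lt hnx
      rw [transversalFun, if_neg hx, if_pos hnx, transversalInv, if_neg (by omega),
        if_pos (by omega), show n - (-((L.idxOf (-x) : ℤ) - n)).toNat = L.idxOf (-x) by omega,
        List.getD_eq_getElem _ _ (by omega), List.getElem_idxOf, neg_neg]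
    · have hxS : x ∉ SympE n := fun h => (hL.mem_or_neg_mem x h).elim hx hnx
      rw [mem_SympE] at hxS
      rw [transversalFun, if_neg hx, if_neg hnx, transversalInv, if_neg (by omega),
        if_neg (by omega)]

lemma rightInverse : Function.RightInverse (transversalInv n L) (transversalFun n L) := by
  intro j
  have hlen := hL.length_eq
  by_cases hj : 0 < j ∧ j ≤ (n : ℤ)
  · have hk : n - j.toNat < L.length := by omega
    rw [transversalInv, if_pos hj, List.getD_eq_getElem _ _ hk, transversalFun,
      if_pos (List.getElem_mem _), List.Nodup.idxOf_getElem hL.nodup]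
    omega
  · by_cases hj' : -(n : ℤ) ≤ j ∧ j < 0
    · have hk : n - (-j).toNat < L.length := by omega
      rw [transversalInv, if_neg hj, if_pos hj', List.getD_eq_getElem _ _ hk, transversalFun,
        if_neg (hL.neg_notMem _ (List.getElem_mem _)), neg_neg, if_pos (List.getElem_mem _),
        List.Nodup.idxOf_getElem hL.nodup]
      omega
    · have hjS : j ∉ SympE n := by
        rw [mem_SympE]
        omega
      have hjL : j ∉ L := fun h => hjS (hL.subset j h)
      have hnjL : -j ∉ L := fun h => hjS (by simpa using neg_mem_SympE (hL.subset _ h))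
      rw [transversalInv, if_neg hj, if_neg hj', transversalFun, if_neg hjL, if_neg hnjL]

def perm : Equiv.Perm ℤ :=
  ⟨transversalFun n L, transversalInv n L, hL.leftInverse, hL.rightInverse⟩

lemma perm_apply (x : ℤ) : hL.perm x = transversalFun n L x := rfl

lemma perm_symm_apply (j : ℤ) : hL.perm.symm j = transversalInv n L j := rfl

lemma isAdmissiblePerm_perm : IsAdmissiblePerm n hL.perm := by
  refine ⟨fun x hx => ?_, fun x => ?_⟩
  · rw [perm_apply]
    rcases hL.mem_or_neg_mem x hx with h | h
    · have := hL.idxOf_lt h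
      rw [transversalFun, if_pos h, mem_SympE]
      omega
    · have := hL.idxOf_lt h
      rw [transversalFun, if_neg fun h' => hL.neg_notMem x h' h, if_pos h, mem_SympE]
      omega
  · rw [perm_apply, perm_apply]
    by_cases hx : x ∈ L
    · rw [transversalFun, transversalFun, if_neg (hL.neg_notMem x hx), neg_neg, if_pos hx,
        if_pos hx]
      ring
    · by_cases hnx : -x ∈ L
      · rw [transversalFun, transversalFun, if_pos hnx, if_neg hx, if_pos hnx]
        ring
      · rw [transversalFun, transversalFun, if_neg hnx, neg_neg, if_neg hx, if_neg hx,
          if_neg hnx]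

lemma orderList_perm :
    orderList n hL.perm = L ++ (L.map (fun x => -x)).reverse := by
  have hlen := hL.length_eq
  rw [orderList, sort_SympE, List.reverse_append, List.map_append, reverse_map_range,
    reverse_map_range, List.map_map, List.map_map]
  congr 1
  · apply List.ext_getElem
    · simp [hlen]
    · intro i h1 h2
      simp only [List.getElem_map, List.getElem_range, Function.comp_apply,
        perm_symm_apply]
      rw [transversalInv, if_pos (by omega),
        show n - (((n - 1 - i : ℕ) : ℤ) + 1).toNat = i by omega,
        List.getD_eq_getElem _ _ (by omega)]
  · apply List.ext_getElem
    · simp [hlen]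
    · intro i h1 h2
      simp only [List.length_map, List.length_range] at h1
      simp only [List.getElem_map, List.getElem_range, Function.comp_apply,
        List.getElem_reverse, List.length_map, perm_symm_apply, hlen]
      rw [transversalInv, if_neg (by omega), if_pos (by omega),
        show n - (-(((n - 1 - i : ℕ) : ℤ) - n)).toNat = n - 1 - i by omega,
        List.getD_eq_getElem _ _ (by omega)]

end IsTransversal

lemma exists_isTransversal_append {n : ℕ} {l : List ℤ} (hnd : l.Nodup)
    (hS : ∀ x ∈ l, x ∈ SympE n) (hadm : ∀ x ∈ l, -x ∉ l) :
    ∃ r, IsTransversal n (l ++ r) ∧ ∀ x ∈ r, x ∉ l ∧ -x ∉ l := by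
  set R := (Finset.Icc (1 : ℤ) n).filter (fun k => k ∉ l ∧ -k ∉ l)
  have mem_R : ∀ x ∈ R.toList, 1 ≤ x ∧ x ≤ n ∧ x ∉ l ∧ -x ∉ l := by
    intro x hx
    simpa [R, and_assoc] using hx
  refine ⟨R.toList, ⟨?_, ?_, ?_, ?_⟩, fun x hx => (mem_R x hx).2.2⟩
  · intro x hx
    rcases List.mem_append.1 hx with h | h
    · exact hS x h
    · have := mem_R x h
      rw [mem_SympE]
      omega
  · exact List.nodup_append.2 ⟨hnd, Finset.nodup_toList R,
      fun a ha b hb hab => (mem_R b hb).2.2.1 (hab ▸ ha)⟩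
  · intro x hx hnx
    rcases List.mem_append.1 hx with h | h <;> rcases List.mem_append.1 hnx with h' | h'
    · exact hadm x h h'
    · exact (mem_R _ h').2.2.2 (by rwa [neg_neg])
    · exact (mem_R x h).2.2.2 h'
    · have := (mem_R x h).1
      have := (mem_R _ h').1
      omega
  · intro x hx
    by_contra! hno
    simp only [List.mem_append, not_or] at hno
    have hx' := mem_SympE.1 hx
    have hR : |x| ∈ R.toList := by
      simp only [R, Finset.mem_toList, Finset.mem_filter, Finset.mem_Icc]
      rcases abs_cases x with ⟨h, _⟩ | ⟨h, _⟩ <;> rw [h]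
      · exact ⟨⟨by omega, by omega⟩, hno.1.1, hno.2.1⟩
      · exact ⟨⟨by omega, by omega⟩, hno.2.1, by rw [neg_neg]; exact hno.1.1⟩
    rcases abs_cases x with ⟨h, _⟩ | ⟨h, _⟩ <;> rw [h] at hR
    · exact hno.1.2 hR
    · exact hno.2.2 hR

theorem exists_orderList_eq_append {n : ℕ} {l₁ l₂ : List ℤ} (hnd : (l₁ ++ l₂).Nodup)
    (hS : ∀ x ∈ l₁ ++ l₂, x ∈ SympE n) (hadm : ∀ x ∈ l₁ ++ l₂, -x ∉ l₁ ++ l₂) :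
    ∃ w Q, IsAdmissiblePerm n w ∧
      orderList n w = l₁ ++ l₂ ++ Q ++ (l₁.map (fun x => -x)).reverse ∧
      ∀ z ∈ Q, z ∉ l₁ ++ l₂ ∧ -z ∉ l₁ := by
  obtain ⟨r, hL, hr⟩ := exists_isTransversal_append hnd hS hadm
  refine ⟨hL.perm, r ++ ((r.map (fun x => -x)).reverse ++ (l₂.map (fun x => -x)).reverse),
    hL.isAdmissiblePerm_perm,
    by rw [hL.orderList_perm]; simp only [List.map_append, List.reverse_append, List.append_assoc],
    ?_⟩
  intro z hz
  simp only [List.mem_append, mem_reverse_map_neg] at hz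
  rcases hz with hz | hz | hz
  · exact ⟨(hr z hz).1, fun h => (hr z hz).2 (List.mem_append_left _ h)⟩
  · exact ⟨by simpa using (hr _ hz).2, fun h => (hr _ hz).1 (List.mem_append_left _ h)⟩
  · exact ⟨fun h => hadm _ (List.mem_append_right _ hz) (by rwa [neg_neg]),
      fun h => List.disjoint_of_nodup_append hnd h hz⟩

section Extensions

variable {n : ℕ} {ℬ : Finset (Finset ℤ)}

noncomputable def extensions (n : ℕ) (ℬ : Finset (Finset ℤ)) (I : Finset ℤ) : Finset ℤ :=
  (SympE n).filter (fun x => x ∉ I ∧ insert x I ∈ indepSets n ℬ)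

lemma mem_extensions {I : Finset ℤ} {x : ℤ} :
    x ∈ extensions n ℬ I ↔ x ∉ I ∧ insert x I ∈ indepSets n ℬ := by
  rw [extensions, Finset.mem_filter, and_iff_right_iff_imp]
  exact fun h => mem_SympE_of_mem_indepSets h.2 (Finset.mem_insert_self x I)

lemma IsSymplecticMatroid.neg_notMem_of_mem_extensions (hB : IsSymplecticMatroid n ℬ)
    {I : Finset ℤ} {x : ℤ} (hx : x ∈ extensions n ℬ I) : -x ∉ I := fun hnx =>
  hB.isAdmissibleSet_of_mem_indepSets (mem_extensions.1 hx).2 x (Finset.mem_insert_self x I)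
    (Finset.mem_insert_of_mem hnx)

end Extensions

noncomputable def exchangeList (I K F : Finset ℤ) : List ℤ :=
  (I \ K).toList ++ F.toList ++ (I ∩ K).toList

section ExchangeList

variable {I K F : Finset ℤ}

lemma mem_exchangeList {x : ℤ} : x ∈ exchangeList I K F ↔ x ∈ I ∨ x ∈ F := by
  simp only [exchangeList, List.mem_append, Finset.mem_toList, Finset.mem_sdiff, Finset.mem_inter]
  tauto

lemma nodup_exchangeList (hF : Disjoint F I) : (exchangeList I K F).Nodup := by
  simp only [exchangeList, List.nodup_append, Finset.nodup_toList, List.mem_append,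
    Finset.mem_toList, Finset.mem_sdiff, Finset.mem_inter, true_and]
  refine ⟨fun a ha b hb hab => Finset.disjoint_left.1 hF (hab ▸ hb) ha.1, ?_⟩
  rintro a (ha | ha) b hb rfl
  · exact ha.2 hb.2
  · exact Finset.disjoint_left.1 hF ha hb.1

theorem exists_orderList_eq_exchangeList_append {n : ℕ} (hIS : I ⊆ SympE n) (hFS : F ⊆ SympE n)
    (hIadm : IsAdmissibleSet I) (hFadm : IsAdmissibleSet F) (hFI : ∀ x ∈ F, x ∉ I ∧ -x ∉ I) :
    ∃ w Q, IsAdmissiblePerm n w ∧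
      orderList n w = exchangeList I K F ++ Q ++
        (((I \ K).toList ++ F.toList).map (fun x => -x)).reverse ∧
      ∀ z ∈ Q, z ∉ I ∧ z ∉ F ∧ -z ∉ I \ K ∧ -z ∉ F := by
  have hadm : ∀ x ∈ exchangeList I K F, -x ∉ exchangeList I K F := by
    intro x hx hnx
    rcases mem_exchangeList.1 hx with h | h <;> rcases mem_exchangeList.1 hnx with h' | h'
    · exact hIadm x h h'
    · exact (hFI _ h').2 (by rwa [neg_neg])
    · exact (hFI x h).2 h'
    · exact hFadm x h h'
  obtain ⟨w, Q, hw, hO, hQ⟩ := exists_orderList_eq_append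
    (nodup_exchangeList (K := K) (Finset.disjoint_left.2 fun x hx => (hFI x hx).1))
    (fun x hx => (mem_exchangeList.1 hx).elim (@hIS x) (@hFS x)) hadm
  refine ⟨w, Q, hw, hO, fun z hz => ?_⟩
  have h₁ := (hQ z hz).1
  have h₂ := (hQ z hz).2
  rw [← exchangeList, mem_exchangeList, not_or] at h₁
  simp only [List.mem_append, Finset.mem_toList, not_or] at h₂
  exact ⟨h₁.1, h₁.2, h₂.1, h₂.2⟩

end ExchangeList

namespace IsSymplecticMatroid

variable {n : ℕ} {ℬ : Finset (Finset ℤ)} (hB : IsSymplecticMatroid n ℬ)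
include hB

/-- Optimality of the greedy solution against the indicator weight of an initial segment `P`
of the ordering. -/
theorem card_le_card_greedyAux {w : Equiv.Perm ℤ} (hw : IsAdmissiblePerm n w) {P S : List ℤ}
    (hPS : orderList n w = P ++ S) {J : Finset ℤ} (hJ : J ∈ indepSets n ℬ)
    (hJP : ∀ z ∈ J, z ∈ P) :
    J.card ≤ (greedyAux ℬ P ∅).toFinset.card := by
  have hcompat : IsCompatibleWeight n w (fun x => if x ∈ P then 1 else 0) := by
    intro i _ j hj hij
    by_cases hiP : i ∈ P
    · have hjP : j ∈ P := by
        have hjO : j ∈ P ++ S := hPS ▸ mem_orderList_s2.2 (hw.1 j hj)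
        refine (List.mem_append.1 hjO).resolve_right fun hjS => ?_
        have := (List.pairwise_append.1 (hPS ▸ pairwise_orderList n w)).2.2 i hiP j hjS
        omega
      simp [hiP, hjP]
    · simp only [if_neg hiP]
      split_ifs <;> norm_num
  obtain ⟨B, hBm, hJB⟩ := (mem_indepSets_iff hB).1 hJ
  have hopt := hB.2.2.2 w hw _ hcompat B hBm
  simp only [Finset.sum_boole] at hopt
  have hsub : (greedySol n ℬ w).filter (· ∈ P) ⊆ (greedyAux ℬ P ∅).toFinset := by
    intro x hx
    rw [Finset.mem_filter, greedySol, greedyPicks, hPS, greedyAux_append, List.mem_toFinset,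
      List.mem_append] at hx
    obtain ⟨h | h, hxP⟩ := hx
    · exact List.mem_toFinset.2 h
    · exact absurd (mem_of_mem_greedyAux ℬ h)
        (List.disjoint_of_nodup_append (hPS ▸ nodup_orderList n w) hxP)
  calc J.card ≤ (B.filter (· ∈ P)).card :=
        Finset.card_le_card fun z hz => Finset.mem_filter.2 ⟨hJB hz, hJP z hz⟩
    _ ≤ (greedyAux ℬ P ∅).toFinset.card := (Nat.cast_le.1 hopt).trans (Finset.card_le_card hsub)

theorem toFinset_greedyAux_exchangeList_append {I : Finset ℤ} (hI : I ∈ indepSets n ℬ)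
    (K F : Finset ℤ) {Q : List ℤ} (hF : ∀ a ∈ F, insert a (I \ K) ∉ indepSets n ℬ)
    (hQ : ∀ a ∈ Q, insert a I ∉ indepSets n ℬ) :
    (greedyAux ℬ (exchangeList I K F ++ Q) ∅).toFinset = I := by
  obtain ⟨B, hBm, hIB⟩ := (mem_indepSets_iff hB).1 hI
  have hskipF : ∀ a ∈ F.toList, ¬ ∃ B' ∈ ℬ, insert a (I \ K) ⊆ B' := fun a ha hex =>
    hF a (Finset.mem_toList.1 ha) ((mem_indepSets_iff hB).2 hex)
  have hskipQ : ∀ a ∈ Q, ¬ ∃ B' ∈ ℬ, insert a I ⊆ B' := fun a ha hex =>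
    hQ a ha ((mem_indepSets_iff hB).2 hex)
  simp only [exchangeList, List.append_assoc]
  rw [greedyAux_append, greedyAux_eq_self ℬ (l := (I \ K).toList) (B := ∅)
      ⟨B, hBm, by
        rw [Finset.empty_union, Finset.toList_toFinset]; exact Finset.sdiff_subset.trans hIB⟩,
    Finset.empty_union, Finset.toList_toFinset, greedyAux_append, greedyAux_eq_nil ℬ hskipF,
    List.toFinset_nil, Finset.union_empty, List.nil_append, greedyAux_append,
    greedyAux_eq_self ℬ (l := (I ∩ K).toList) (B := I \ K)
      ⟨B, hBm, by rw [Finset.toList_toFinset, Finset.sdiff_union_inter]; exact hIB⟩,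
    Finset.toList_toFinset, Finset.sdiff_union_inter, greedyAux_eq_nil ℬ hskipQ, List.append_nil,
    List.toFinset_append, Finset.toList_toFinset, Finset.toList_toFinset, Finset.sdiff_union_inter]

theorem exists_mem_sdiff_insert_mem_indepSets {I J : Finset ℤ} (hI : I ∈ indepSets n ℬ)
    (hJ : J ∈ indepSets n ℬ) (hcard : I.card < J.card) (hadm : IsAdmissibleSet (I ∪ J)) :
    ∃ y ∈ J \ I, insert y I ∈ indepSets n ℬ := by
  by_contra! hno
  have hJI : ∀ x ∈ J \ I, x ∈ J ∧ x ∉ I := fun x hx => Finset.mem_sdiff.1 hx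
  obtain ⟨w, Q, hw, hO, -⟩ := exists_orderList_eq_exchangeList_append (K := ∅)
    (fun x => mem_SympE_of_mem_indepSets hI)
    (fun x hx => mem_SympE_of_mem_indepSets hJ (hJI x hx).1)
    (hB.isAdmissibleSet_of_mem_indepSets hI)
    (fun x hx hnx => hadm x (Finset.mem_union_right _ (hJI x hx).1)
      (Finset.mem_union_right _ (hJI _ hnx).1))
    (fun x hx => ⟨(hJI x hx).2, hadm x (Finset.mem_union_right _ (hJI x hx).1) ∘
      Finset.mem_union_left _⟩)
  have hgreedy := hB.toFinset_greedyAux_exchangeList_append hI ∅ (J \ I) (Q := [])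
    (fun a ha => by simpa using hno a ha) (by simp)
  have hPS : orderList n w = (exchangeList I ∅ (J \ I) ++ []) ++
      (Q ++ (((I \ ∅).toList ++ (J \ I).toList).map (fun x => -x)).reverse) := by
    rw [hO, List.append_nil, List.append_assoc]
  have key := hB.card_le_card_greedyAux hw hPS hJ fun z hz => List.mem_append_left _
    (mem_exchangeList.2 ((em (z ∈ I)).imp id fun h => Finset.mem_sdiff.2 ⟨hz, h⟩))
  rw [hgreedy] at key
  omega

theorem exists_insert_mem_indepSets_and_insert_neg_mem {I J : Finset ℤ}
    (hI : I ∈ indepSets n ℬ) (hJ : J ∈ indepSets n ℬ) (hcard : I.card < J.card)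
    (hy : ∀ y ∈ J \ I, insert y I ∉ indepSets n ℬ) :
    ∃ x, x ∉ I ∧ insert x I ∈ indepSets n ℬ ∧ insert (-x) (I \ negSet J) ∈ indepSets n ℬ := by
  by_contra! hW
  set E := extensions n ℬ I
  have hE_J : ∀ x ∈ E, x ∉ J := fun x hx hxJ =>
    hy x (Finset.mem_sdiff.2 ⟨hxJ, (mem_extensions.1 hx).1⟩) (mem_extensions.1 hx).2
  have hF : ∀ a ∈ negSet E, insert a (I \ negSet J) ∉ indepSets n ℬ := by
    intro a ha
    have hext := mem_extensions.1 (mem_negSet.1 ha)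
    simpa using hW (-a) hext.1 hext.2
  have hFadm : IsAdmissibleSet (negSet E) := fun a ha hna =>
    hF a ha (mem_indepSets_of_subset (mem_extensions.1 (by simpa [mem_negSet] using hna)).2
      (Finset.insert_subset_insert _ Finset.sdiff_subset))
  obtain ⟨w, Q, hw, hO, hQ⟩ := exists_orderList_eq_exchangeList_append (K := negSet J)
    (fun x => mem_SympE_of_mem_indepSets hI)
    (fun x hx => by simpa using neg_mem_SympE (Finset.mem_filter.1 (mem_negSet.1 hx)).1)
    (hB.isAdmissibleSet_of_mem_indepSets hI) hFadm
    (fun x hx => ⟨by simpa using hB.neg_notMem_of_mem_extensions (mem_negSet.1 hx),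
      (mem_extensions.1 (mem_negSet.1 hx)).1⟩)
  have hQ' : ∀ a ∈ Q, insert a I ∉ indepSets n ℬ := fun a ha hins =>
    (hQ a ha).2.2.2 (mem_negSet.2 (by rw [neg_neg]; exact mem_extensions.2 ⟨(hQ a ha).1, hins⟩))
  have hJP : ∀ z ∈ J, z ∈ exchangeList I (negSet J) (negSet E) ++ Q := by
    intro z hz
    have hzO : z ∈ orderList n w := mem_orderList_s2.2 (hw.1 z (mem_SympE_of_mem_indepSets hJ hz))
    rw [hO, List.mem_append] at hzO
    refine hzO.resolve_right fun hzS => ?_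
    simp only [mem_reverse_map_neg, List.mem_append, Finset.mem_toList, mem_negSet, neg_neg,
      Finset.mem_sdiff] at hzS
    exact hzS.elim (fun h => h.2 hz) (hE_J z · hz)
  have key := hB.card_le_card_greedyAux hw hO hJ hJP
  rw [hB.toFinset_greedyAux_exchangeList_append hI (negSet J) (negSet E) hF hQ'] at key
  omega

end IsSymplecticMatroid

theorem symplectic_matroid_indep_necessity_general (n : ℕ)
    (ℬ : Finset (Finset ℤ)) (hB : IsSymplecticMatroid n ℬ)
    (I J : Finset ℤ)
    (hI : I ∈ indepSets n ℬ) (hJ : J ∈ indepSets n ℬ)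
    (hcard : I.card < J.card)
    (hy : ∀ y ∈ J \ I, insert y I ∉ indepSets n ℬ) :
    ¬ IsAdmissibleSet (I ∪ J) ∧
      ∃ x, x ∉ I ∧ insert x I ∈ indepSets n ℬ ∧
        insert (-x) (I \ negSet J) ∈ indepSets n ℬ := by
  refine ⟨fun hadm => ?_, hB.exists_insert_mem_indepSets_and_insert_neg_mem hI hJ hcard hy⟩
  obtain ⟨y, hyJI, hyI⟩ := hB.exists_mem_sdiff_insert_mem_indepSets hI hJ hcard hadm
  exact hy y hyJI hyI

/-- **Necessity.** If `ℐ` is the family of independent sets of a symplectic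
matroid `(E_{±n}, ℬ)`, and `I, J ∈ ℐ` with `|I| < |J|` and `{y} ∪ I ∉ ℐ` for all
`y ∈ J \ I`, then `I ∪ J` is inadmissible and there exists `x ∉ I` such that both
`{x} ∪ I` and `{-x} ∪ (I \ (-J))` are in `ℐ`. -/
theorem symplectic_matroid_indep_necessity (n : ℕ) (hn : 0 < n)
    (ℬ : Finset (Finset ℤ)) (hB : IsSymplecticMatroid n ℬ)
    (I J : Finset ℤ)
    (hI : I ∈ indepSets n ℬ) (hJ : J ∈ indepSets n ℬ)
    (hcard : I.card < J.card)
    (hy : ∀ y ∈ J \ I, insert y I ∉ indepSets n ℬ) :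
    ¬ IsAdmissibleSet (I ∪ J) ∧
      ∃ x, x ∉ I ∧ insert x I ∈ indepSets n ℬ ∧
        insert (-x) (I \ negSet J) ∈ indepSets n ℬ :=
  symplectic_matroid_indep_necessity_general n ℬ hB I J hI hJ hcard hy
end

section
/- Let ℐ be a nonempty subset-closed family of admissible subsets of E_{±n} with the property that whenever I, J ∈ ℐ satisfy |I| < |J| and for all y ∈ J∖I the set {y} ∪ I is not in ℐ, then I ∪ J is inadmissible and there exists x ∉ I such that both {x} ∪ I and {−x} ∪ (I ∖ (−J)) are in ℐ. Then all maximal members of ℐ with respect to inclusion have the same number of elements. -/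
lemma insert_notMem_of_mem_maximalMembers {ℐ : Finset (Finset ℤ)} {B : Finset ℤ}
    (hB : B ∈ maximalMembers ℐ) {x : ℤ} (hx : x ∉ B) : insert x B ∉ ℐ := fun hins =>
  hx <| (Finset.mem_filter.1 hB).2 _ hins (Finset.subset_insert x B) ▸ Finset.mem_insert_self x B

lemma card_le_of_mem_maximalMembers {ℐ : Finset (Finset ℤ)} (hex : ExchangeProp ℐ)
    {B : Finset ℤ} (hB : B ∈ maximalMembers ℐ) {J : Finset ℤ} (hJ : J ∈ ℐ) :
    J.card ≤ B.card := by
  by_contra! hlt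
  have hstuck : ∀ y ∈ J \ B, insert y B ∉ ℐ := fun y hy =>
    insert_notMem_of_mem_maximalMembers hB (Finset.mem_sdiff.1 hy).2
  obtain ⟨-, x, hx, hins, -⟩ := hex B (Finset.mem_of_mem_filter B hB) J hJ hlt hstuck
  exact insert_notMem_of_mem_maximalMembers hB hx hins

theorem maximal_members_equicardinal_general (ℐ : Finset (Finset ℤ))
    (hex : ExchangeProp ℐ) :
    ∀ B ∈ maximalMembers ℐ, ∀ B' ∈ maximalMembers ℐ, B.card = B'.card := fun _ hB _ hB' =>
  le_antisymm (card_le_of_mem_maximalMembers hex hB' (Finset.mem_of_mem_filter _ hB))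
    (card_le_of_mem_maximalMembers hex hB (Finset.mem_of_mem_filter _ hB'))

/-- If a nonempty subset-closed family `ℐ` of admissible subsets of `E_{±n}`
satisfies the exchange property, then all maximal members of `ℐ` (with respect
to inclusion) have the same number of elements. -/
theorem maximal_members_equicardinal (n : ℕ) (hn : 0 < n) (ℐ : Finset (Finset ℤ))
    (hne : ℐ.Nonempty)
    (hclosed : ∀ I ∈ ℐ, ∀ I' ⊆ I, I' ∈ ℐ)
    (hadm : ∀ I ∈ ℐ, I ⊆ SympE n ∧ IsAdmissibleSet I)
    (hex : ExchangeProp ℐ) :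
    ∀ B ∈ maximalMembers ℐ, ∀ B' ∈ maximalMembers ℐ, B.card = B'.card :=
  maximal_members_equicardinal_general ℐ hex
end
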